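/- Let A be an invertible n×n real matrix with n ≥ 2 and rows a₁,…,aₙ, let x ∈ ℝⁿ, and consider the random sequence y₁ = x, y_{k+1} = R_{i_k} y_k with independent indices i_k chosen with probability ‖a_{i_k}‖²/‖A‖_F² and R_j y = y − 2·(⟨y, a_j⟩/‖a_j‖²)·a_j. Then for all 1 ≤ k < ℓ ≤ m, |E⟨y_k, y_ℓ⟩| ≤ (1 − 2/(‖A⁻¹‖²·‖A‖_F²))^{ℓ−k}·‖x‖², where E denotes the sum over all index sequences weighted by the product of the probabilities. -/

import Mathlib

open scoped RealInnerProductSpace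
open Finset

/-- The `i`-th row of the matrix `A`, viewed as a vector in Euclidean space. -/
noncomputable def row {n : ℕ} (A : Matrix (Fin n) (Fin n) ℝ) (i : Fin n) :
    EuclideanSpace ℝ (Fin n) := (WithLp.equiv 2 (Fin n → ℝ)).symm (A i)

/-- View a plain vector as an element of Euclidean space. -/
noncomputable def toE {n : ℕ} (v : Fin n → ℝ) : EuclideanSpace ℝ (Fin n) :=
  (WithLp.equiv 2 (Fin n → ℝ)).symm v

/-- View an element of Euclidean space as a plain vector. -/
noncomputable def ofE {n : ℕ} (v : EuclideanSpace ℝ (Fin n)) : Fin n → ℝ :=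
  WithLp.equiv 2 (Fin n → ℝ) v

/-- The squared Frobenius norm `‖A‖_F²` of a matrix. -/
def frobSq {n : ℕ} (A : Matrix (Fin n) (Fin n) ℝ) : ℝ := ∑ i, ∑ j, (A i j) ^ 2

/-- The ℓ² operator norm of a matrix. -/
noncomputable def opNorm {n : ℕ} (A : Matrix (Fin n) (Fin n) ℝ) : ℝ :=
  ‖Matrix.toEuclideanCLM (𝕜 := ℝ) A‖

/-- The reflection `R_i x = x − 2·(⟨x, a_i⟩/‖a_i‖²)·a_i` through the hyperplane
`{y : ⟨a_i, y⟩ = 0}`, where `a_i` is the `i`-th row of `A`. -/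
noncomputable def reflRow {n : ℕ} (A : Matrix (Fin n) (Fin n) ℝ) (i : Fin n)
    (x : EuclideanSpace ℝ (Fin n)) : EuclideanSpace ℝ (Fin n) :=
  x - (2 * (⟪x, row A i⟫ / ‖row A i‖ ^ 2)) • row A i

/-- `applySeq A k is x = (R_{i_k} ∘ ⋯ ∘ R_{i_1}) x` for the index sequence `is`. -/
noncomputable def applySeq {n : ℕ} (A : Matrix (Fin n) (Fin n) ℝ) :
    (k : ℕ) → (Fin k → Fin n) → EuclideanSpace ℝ (Fin n) → EuclideanSpace ℝ (Fin n)
  | 0, _, x => x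
  | k + 1, is, x => reflRow A (is (Fin.last k)) (applySeq A k (fun j => is j.castSucc) x)
open scoped RealInnerProductSpace
open Finset
section
variable {n : ℕ} (A : Matrix (Fin n) (Fin n) ℝ)

local notation "E" => EuclideanSpace ℝ (Fin n)

lemma row_apply (i j : Fin n) : row A i j = A i j := rfl

lemma inner_row (z : E) (i : Fin n) : ⟪z, row A i⟫ = ∑ j, z j * A i j := by
  simp [row, PiLp.inner_apply]
  exact Finset.sum_congr rfl fun j _ => mul_comm _ _

lemma norm_row_sq (i : Fin n) : ‖row A i‖ ^ 2 = ∑ j, A i j ^ 2 := by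
  rw [← real_inner_self_eq_norm_sq, inner_row]
  simp [row_apply, sq]

lemma frobSq_eq : frobSq A = ∑ i, ‖row A i‖ ^ 2 := by
  simp [frobSq, norm_row_sq]

lemma row_ne_zero (hA : IsUnit A) (i : Fin n) : row A i ≠ 0 := by
  intro h
  have h0 : A i = 0 := by
    funext j
    have := congrFun (congrArg (WithLp.equiv 2 (Fin n → ℝ)) h) j
    simpa [row] using this
  have : A.det = 0 := Matrix.det_eq_zero_of_row_eq_zero i (fun j => congrFun h0 j)
  have hd : IsUnit A.det := (Matrix.isUnit_iff_isUnit_det A).mp hA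
  rw [this] at hd
  exact one_ne_zero (isUnit_zero_iff.mp hd).symm

lemma frobSq_pos (hA : IsUnit A) (hn : 1 ≤ n) : 0 < frobSq A := by
  rw [frobSq_eq]
  refine Finset.sum_pos (fun i _ => ?_) ⟨⟨0, hn⟩, Finset.mem_univ _⟩
  exact pow_pos (norm_pos_iff.mpr (row_ne_zero A hA i)) 2

lemma norm_reflRow (hA : IsUnit A) (i : Fin n) (y : E) : ‖reflRow A i y‖ = ‖y‖ := by
  have ha : ‖row A i‖ ≠ 0 := norm_ne_zero_iff.mpr (row_ne_zero A hA i)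
  have h2 : ‖reflRow A i y‖ ^ 2 = ‖y‖ ^ 2 := by
    rw [reflRow, @norm_sub_sq_real, real_inner_smul_right, norm_smul]
    rw [mul_pow, Real.norm_eq_abs, sq_abs]
    field_simp
    ring
  rw [← Real.sqrt_sq (norm_nonneg (reflRow A i y)), h2, Real.sqrt_sq (norm_nonneg y)]

/-- The averaging operator `M = I - (2/‖A‖_F²) AᵀA`. -/
noncomputable def Mlin : E →ₗ[ℝ] E where
  toFun z := z - (2 / frobSq A) • ∑ i, ⟪z, row A i⟫ • row A i
  map_add' z w := by
    simp only [inner_add_left, add_smul, Finset.sum_add_distrib, smul_add]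
    abel
  map_smul' c z := by
    simp only [inner_smul_left, RingHom.id_apply, RCLike.star_def]
    simp only [conj_trivial, mul_smul, ← Finset.smul_sum, smul_sub]
    rw [smul_comm]

lemma Mlin_apply (z : E) :
    Mlin A z = z - (2 / frobSq A) • ∑ i, ⟪z, row A i⟫ • row A i := rfl

lemma Mlin_symm (y z : E) : ⟪Mlin A y, z⟫ = ⟪y, Mlin A z⟫ := by
  simp only [Mlin_apply, inner_sub_left, inner_sub_right, real_inner_smul_left,
    real_inner_smul_right, sum_inner, inner_sum]
  congr 2
  refine Finset.sum_congr rfl (fun i _ => ?_)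
  rw [real_inner_comm (row A i) z]
  ring

lemma sum_p_eq_one (hA : IsUnit A) (hn : 1 ≤ n) :
    ∑ i, ‖row A i‖ ^ 2 / frobSq A = 1 := by
  rw [← Finset.sum_div, ← frobSq_eq, div_self (frobSq_pos A hA hn).ne']

lemma sum_p_smul_refl (hA : IsUnit A) (hn : 1 ≤ n) (z : E) :
    ∑ i, (‖row A i‖ ^ 2 / frobSq A) • reflRow A i z = Mlin A z := by
  have hF := (frobSq_pos A hA hn).ne'
  rw [Mlin_apply]
  have : ∀ i : Fin n, (‖row A i‖ ^ 2 / frobSq A) • reflRow A i z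
      = (‖row A i‖ ^ 2 / frobSq A) • z - (2 / frobSq A) • (⟪z, row A i⟫ • row A i) := by
    intro i
    have ha : ‖row A i‖ ^ 2 ≠ 0 := by
      have := norm_pos_iff.mpr (row_ne_zero A hA i)
      positivity
    rw [reflRow, smul_sub, smul_smul, smul_smul]
    congr 2
    have hr : ‖row A i‖ ≠ 0 := norm_ne_zero_iff.mpr (row_ne_zero A hA i)
    field_simp
  rw [Finset.sum_congr rfl (fun i _ => this i), Finset.sum_sub_distrib,
    ← Finset.sum_smul, sum_p_eq_one A hA hn, one_smul, ← Finset.smul_sum]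

lemma sum_p_inner (hA : IsUnit A) (hn : 1 ≤ n) (y z : E) :
    ∑ i, (‖row A i‖ ^ 2 / frobSq A) * ⟪y, reflRow A i z⟫ = ⟪y, Mlin A z⟫ := by
  rw [← sum_p_smul_refl A hA hn z, inner_sum]
  exact Finset.sum_congr rfl fun i _ => (real_inner_smul_right _ _ _).symm

lemma norm_applySeq (hA : IsUnit A) (t : ℕ) (is : Fin t → Fin n) (x : E) :
    ‖applySeq A t is x‖ = ‖x‖ := by
  induction t with
  | zero => rfl
  | succ t ih => rw [applySeq, norm_reflRow A hA, ih]

lemma inner_Mlin_self (z : E) :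
    ⟪z, Mlin A z⟫ = ‖z‖ ^ 2 - (2 / frobSq A) * ∑ i, ⟪z, row A i⟫ ^ 2 := by
  rw [Mlin_apply, inner_sub_right, real_inner_smul_right, real_inner_self_eq_norm_sq, inner_sum]
  congr 2
  exact Finset.sum_congr rfl fun i _ => by rw [real_inner_smul_right, sq]

lemma Q_eq (z : E) :
    ∑ i, ⟪z, row A i⟫ ^ 2 = ‖Matrix.toEuclideanCLM (𝕜 := ℝ) A z‖ ^ 2 := by
  rw [← real_inner_self_eq_norm_sq, PiLp.inner_apply]
  refine Finset.sum_congr rfl fun i _ => ?_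
  have : (Matrix.toEuclideanCLM (𝕜 := ℝ) A z) i
      = ∑ j, A i j * z j := by
    have := Matrix.ofLp_toEuclideanCLM (n := Fin n) (𝕜 := ℝ) A z
    have h2 := congrFun this i
    simpa [Matrix.mulVec, dotProduct] using h2
  have hsum : ∑ j, z j * A i j = ∑ j, A i j * z j :=
    Finset.sum_congr rfl fun j _ => mul_comm _ _
  rw [this, inner_row, hsum, RCLike.inner_apply]
  simp [sq]

lemma norm_le_opNorm_inv (hA : IsUnit A) (z : E) :
    ‖z‖ ≤ opNorm A⁻¹ * ‖Matrix.toEuclideanCLM (𝕜 := ℝ) A z‖ := by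
  have hinv : A⁻¹ * A = 1 := Matrix.nonsing_inv_mul A ((Matrix.isUnit_iff_isUnit_det A).mp hA)
  have h1 : Matrix.toEuclideanCLM (𝕜 := ℝ) A⁻¹ (Matrix.toEuclideanCLM (𝕜 := ℝ) A z) = z := by
    have : Matrix.toEuclideanCLM (𝕜 := ℝ) (A⁻¹ * A) = 1 := by rw [hinv, map_one]
    calc Matrix.toEuclideanCLM (𝕜 := ℝ) A⁻¹ (Matrix.toEuclideanCLM (𝕜 := ℝ) A z)
        = (Matrix.toEuclideanCLM (𝕜 := ℝ) A⁻¹ * Matrix.toEuclideanCLM (𝕜 := ℝ) A) z := rfl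
      _ = Matrix.toEuclideanCLM (𝕜 := ℝ) (A⁻¹ * A) z := by rw [map_mul]
      _ = z := by rw [this]; rfl
  calc ‖z‖ = ‖Matrix.toEuclideanCLM (𝕜 := ℝ) A⁻¹ (Matrix.toEuclideanCLM (𝕜 := ℝ) A z)‖ := by
        rw [h1]
    _ ≤ opNorm A⁻¹ * ‖Matrix.toEuclideanCLM (𝕜 := ℝ) A z‖ :=
        ContinuousLinearMap.le_opNorm _ _

lemma opNorm_inv_pos (hA : IsUnit A) (hn : 1 ≤ n) : 0 < opNorm A⁻¹ := by
  set z : E := EuclideanSpace.single ⟨0, hn⟩ (1 : ℝ)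
  have hz : ‖z‖ = 1 := by simp [z, EuclideanSpace.norm_single]
  have := norm_le_opNorm_inv A hA z
  rw [hz] at this
  by_contra h
  push_neg at h
  nlinarith [norm_nonneg (Matrix.toEuclideanCLM (𝕜 := ℝ) A z), mul_nonneg (le_of_lt (by linarith : (0:ℝ) < 1)) (norm_nonneg z)]

lemma Q_lower (hA : IsUnit A) (hn : 1 ≤ n) (z : E) :
    ‖z‖ ^ 2 / opNorm A⁻¹ ^ 2 ≤ ∑ i, ⟪z, row A i⟫ ^ 2 := by
  have hc := opNorm_inv_pos A hA hn
  rw [Q_eq]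
  rw [div_le_iff₀ (by positivity)]
  have := norm_le_opNorm_inv A hA z
  nlinarith [norm_nonneg z, norm_nonneg (Matrix.toEuclideanCLM (𝕜 := ℝ) A z)]

lemma exists_orthogonal (hn : 2 ≤ n) (v : E) (hv : v ≠ 0) :
    ∃ z : E, z ≠ 0 ∧ ⟪v, z⟫ = 0 := by
  set K : Submodule ℝ E := ℝ ∙ v
  have h1 : Module.finrank ℝ K = 1 := finrank_span_singleton hv
  have h2 : Module.finrank ℝ K + Module.finrank ℝ Kᗮ = Module.finrank ℝ E :=
    Submodule.finrank_add_finrank_orthogonal K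
  rw [finrank_euclideanSpace_fin, h1] at h2
  have h3 : 0 < Module.finrank ℝ Kᗮ := by omega
  have h4 : Kᗮ ≠ ⊥ := by
    intro hbot
    rw [hbot] at h3
    simp at h3
  obtain ⟨z, hz, hz0⟩ := Submodule.exists_mem_ne_zero_of_ne_bot h4
  exact ⟨z, hz0, Submodule.mem_orthogonal K z |>.mp hz v (Submodule.mem_span_singleton_self v)⟩

lemma bessel_pair (v z a : E) (hv : v ≠ 0) (hz : z ≠ 0) (hvz : ⟪v, z⟫ = 0) :
    ⟪v, a⟫ ^ 2 / ‖v‖ ^ 2 + ⟪z, a⟫ ^ 2 / ‖z‖ ^ 2 ≤ ‖a‖ ^ 2 := by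
  have hv2 : (0:ℝ) < ‖v‖ ^ 2 := pow_pos (norm_pos_iff.mpr hv) 2
  have hz2 : (0:ℝ) < ‖z‖ ^ 2 := pow_pos (norm_pos_iff.mpr hz) 2
  set w : E := a - (⟪v, a⟫ / ‖v‖ ^ 2) • v - (⟪z, a⟫ / ‖z‖ ^ 2) • z with hw
  have h0 : (0:ℝ) ≤ ⟪w, w⟫ := real_inner_self_nonneg
  have hexp : ⟪w, w⟫ = ‖a‖ ^ 2 - ⟪v, a⟫ ^ 2 / ‖v‖ ^ 2 - ⟪z, a⟫ ^ 2 / ‖z‖ ^ 2 := by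
    have hvv : ⟪v, v⟫ = ‖v‖ ^ 2 := real_inner_self_eq_norm_sq v
    have hzz : ⟪z, z⟫ = ‖z‖ ^ 2 := real_inner_self_eq_norm_sq z
    have haa : ⟪a, a⟫ = ‖a‖ ^ 2 := real_inner_self_eq_norm_sq a
    have hzv : ⟪z, v⟫ = 0 := by rw [real_inner_comm]; exact hvz
    simp only [hw, inner_sub_left, inner_sub_right, real_inner_smul_left, real_inner_smul_right,
      hvz, hzv, hvv, hzz, haa, real_inner_comm a v, real_inner_comm a z]
    field_simp
    ring
  linarith [hexp ▸ h0]

lemma Q_upper (hA : IsUnit A) (hn : 2 ≤ n) (z : E) :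
    ∑ i, ⟪z, row A i⟫ ^ 2 ≤ (frobSq A - 1 / opNorm A⁻¹ ^ 2) * ‖z‖ ^ 2 := by
  have hc := opNorm_inv_pos A hA (by omega)
  rcases eq_or_ne z 0 with rfl | hz
  · simp
  obtain ⟨w, hw0, hzw⟩ := exists_orthogonal hn z hz
  have hz2 : (0:ℝ) < ‖z‖ ^ 2 := pow_pos (norm_pos_iff.mpr hz) 2
  have hw2 : (0:ℝ) < ‖w‖ ^ 2 := pow_pos (norm_pos_iff.mpr hw0) 2
  have hsum : ∑ i, (⟪z, row A i⟫ ^ 2 / ‖z‖ ^ 2 + ⟪w, row A i⟫ ^ 2 / ‖w‖ ^ 2) ≤ frobSq A := by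
    rw [frobSq_eq]
    exact Finset.sum_le_sum fun i _ => bessel_pair z w (row A i) hz hw0 hzw
  rw [Finset.sum_add_distrib, ← Finset.sum_div, ← Finset.sum_div] at hsum
  have hQw : ‖w‖ ^ 2 / opNorm A⁻¹ ^ 2 ≤ ∑ i, ⟪w, row A i⟫ ^ 2 := Q_lower A hA (by omega) w
  have hc2 : (0:ℝ) < opNorm A⁻¹ ^ 2 := pow_pos hc 2
  rw [div_add_div _ _ hz2.ne' hw2.ne'] at hsum
  rw [← sub_nonneg]
  have expand : (frobSq A - 1 / opNorm A⁻¹ ^ 2) * ‖z‖ ^ 2 - ∑ i, ⟪z, row A i⟫ ^ 2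
      = ((frobSq A - ((∑ i, ⟪z, row A i⟫ ^ 2) * ‖w‖ ^ 2 + ‖z‖ ^ 2 * ∑ i, ⟪w, row A i⟫ ^ 2)
          / (‖z‖ ^ 2 * ‖w‖ ^ 2)) * ‖z‖ ^ 2)
        + ((∑ i, ⟪w, row A i⟫ ^ 2) - ‖w‖ ^ 2 / opNorm A⁻¹ ^ 2) * (‖z‖ ^ 2 / ‖w‖ ^ 2) := by
    field_simp
    ring
  rw [expand]
  have t1 : (0:ℝ) ≤ (frobSq A - ((∑ i, ⟪z, row A i⟫ ^ 2) * ‖w‖ ^ 2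
      + ‖z‖ ^ 2 * ∑ i, ⟪w, row A i⟫ ^ 2) / (‖z‖ ^ 2 * ‖w‖ ^ 2)) * ‖z‖ ^ 2 := by
    have : ((∑ i, ⟪z, row A i⟫ ^ 2) * ‖w‖ ^ 2 + ‖z‖ ^ 2 * ∑ i, ⟪w, row A i⟫ ^ 2)
        / (‖z‖ ^ 2 * ‖w‖ ^ 2) ≤ frobSq A := hsum
    nlinarith
  have t2 : (0:ℝ) ≤ ((∑ i, ⟪w, row A i⟫ ^ 2) - ‖w‖ ^ 2 / opNorm A⁻¹ ^ 2) * (‖z‖ ^ 2 / ‖w‖ ^ 2) := by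
    have h := hQw
    have hd : (0:ℝ) ≤ ‖z‖ ^ 2 / ‖w‖ ^ 2 := by positivity
    nlinarith
  linarith

lemma abs_inner_Mlin_le (hA : IsUnit A) (hn : 2 ≤ n) (z : E) :
    |⟪z, Mlin A z⟫| ≤ (1 - 2 / (opNorm A⁻¹ ^ 2 * frobSq A)) * ‖z‖ ^ 2 := by
  have hF := frobSq_pos A hA (by omega)
  have hc := opNorm_inv_pos A hA (by omega)
  have hQl := Q_lower A hA (by omega) z
  have hQu := Q_upper A hA hn z
  rw [inner_Mlin_self]
  generalize hc' : opNorm A⁻¹ = c at hc hQl hQu ⊢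
  generalize hF' : frobSq A = F at hF hQu ⊢
  generalize hQ' : ∑ i, ⟪z, row A i⟫ ^ 2 = Q at hQl hQu ⊢
  have hc2 : (0:ℝ) < c ^ 2 := pow_pos hc 2
  rw [abs_le]
  constructor
  · have key : 2 / F * Q ≤ 2 / F * ((F - 1 / c ^ 2) * ‖z‖ ^ 2) :=
      mul_le_mul_of_nonneg_left hQu (by positivity)
    have expand : 2 / F * ((F - 1 / c ^ 2) * ‖z‖ ^ 2)
        = (2 - 2 / (c ^ 2 * F)) * ‖z‖ ^ 2 := by
      field_simp
    rw [expand] at key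
    nlinarith [sq_nonneg ‖z‖]
  · have key : 2 / F * (‖z‖ ^ 2 / c ^ 2) ≤ 2 / F * Q :=
      mul_le_mul_of_nonneg_left hQl (by positivity)
    have expand : 2 / F * (‖z‖ ^ 2 / c ^ 2) = (2 / (c ^ 2 * F)) * ‖z‖ ^ 2 := by
      rw [div_mul_div_comm, div_mul_eq_mul_div, mul_comm F (c ^ 2)]
    rw [expand] at key
    nlinarith [sq_nonneg ‖z‖]

lemma alpha_nonneg (hA : IsUnit A) (hn : 2 ≤ n) :
    0 ≤ 1 - 2 / (opNorm A⁻¹ ^ 2 * frobSq A) := by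
  set z : E := EuclideanSpace.single ⟨0, by omega⟩ (1 : ℝ) with hzd
  have hz : ‖z‖ = 1 := by simp [hzd, EuclideanSpace.norm_single]
  have h := abs_inner_Mlin_le A hA hn z
  rw [hz] at h
  have := abs_nonneg ⟪z, Mlin A z⟫
  nlinarith

lemma norm_Mlin_le (hA : IsUnit A) (hn : 2 ≤ n) (z : E) :
    ‖Mlin A z‖ ≤ (1 - 2 / (opNorm A⁻¹ ^ 2 * frobSq A)) * ‖z‖ := by
  set α := 1 - 2 / (opNorm A⁻¹ ^ 2 * frobSq A) with hα
  have hα0 : 0 ≤ α := alpha_nonneg A hA hn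
  have hT : (Mlin A).IsSymmetric := fun u v => Mlin_symm A u v
  have hfr : Module.finrank ℝ E = n := finrank_euclideanSpace_fin
  set B := hT.eigenvectorBasis hfr with hB
  set lam := hT.eigenvalues hfr with hlam
  have heig : ∀ i, |lam i| ≤ α := by
    intro i
    have hv1 : ‖B i‖ = 1 := B.orthonormal.1 i
    have h2 : ⟪B i, Mlin A (B i)⟫ = lam i := by
      rw [hT.apply_eigenvectorBasis hfr i, real_inner_smul_right,
        real_inner_self_eq_norm_sq, hv1]
      simp [hlam]
    have := abs_inner_Mlin_le A hA hn (B i)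
    rw [h2, hv1] at this
    simpa using this
  have hsq : ‖Mlin A z‖ ^ 2 ≤ (α * ‖z‖) ^ 2 := by
    have e1 : ‖Mlin A z‖ ^ 2 = ∑ i, (B.repr (Mlin A z) i) ^ 2 := by
      rw [← B.repr.norm_map (Mlin A z), PiLp.norm_sq_eq_of_L2]
      exact Finset.sum_congr rfl fun i _ => by rw [Real.norm_eq_abs, sq_abs]
    have e2 : ‖z‖ ^ 2 = ∑ i, (B.repr z i) ^ 2 := by
      rw [← B.repr.norm_map z, PiLp.norm_sq_eq_of_L2]
      exact Finset.sum_congr rfl fun i _ => by rw [Real.norm_eq_abs, sq_abs]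
    rw [e1, mul_pow, e2, Finset.mul_sum]
    refine Finset.sum_le_sum fun i _ => ?_
    rw [hT.eigenvectorBasis_apply_self_apply hfr z i]
    rw [mul_pow]
    have h5 : lam i ^ 2 ≤ α ^ 2 := by
      rw [← sq_abs (lam i)]
      exact pow_le_pow_left₀ (abs_nonneg _) (heig i) 2
    exact mul_le_mul_of_nonneg_right h5 (sq_nonneg _)
  have h4 : 0 ≤ α * ‖z‖ := mul_nonneg hα0 (norm_nonneg z)
  calc ‖Mlin A z‖ = Real.sqrt (‖Mlin A z‖ ^ 2) := (Real.sqrt_sq (norm_nonneg _)).symm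
    _ ≤ Real.sqrt ((α * ‖z‖) ^ 2) := Real.sqrt_le_sqrt hsq
    _ = α * ‖z‖ := Real.sqrt_sq h4

lemma norm_iterate_Mlin_le (hA : IsUnit A) (hn : 2 ≤ n) (t : ℕ) (z : E) :
    ‖(⇑(Mlin A))^[t] z‖ ≤ (1 - 2 / (opNorm A⁻¹ ^ 2 * frobSq A)) ^ t * ‖z‖ := by
  induction t generalizing z with
  | zero => simp
  | succ t ih =>
    rw [Function.iterate_succ_apply]
    calc ‖(⇑(Mlin A))^[t] (Mlin A z)‖
        ≤ (1 - 2 / (opNorm A⁻¹ ^ 2 * frobSq A)) ^ t * ‖Mlin A z‖ := ih _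
      _ ≤ (1 - 2 / (opNorm A⁻¹ ^ 2 * frobSq A)) ^ t
          * ((1 - 2 / (opNorm A⁻¹ ^ 2 * frobSq A)) * ‖z‖) := by
          exact mul_le_mul_of_nonneg_left (norm_Mlin_le A hA hn z)
            (pow_nonneg (alpha_nonneg A hA hn) t)
      _ = (1 - 2 / (opNorm A⁻¹ ^ 2 * frobSq A)) ^ (t + 1) * ‖z‖ := by ring

lemma exp_inner (hA : IsUnit A) (hn1 : 1 ≤ n) (t : ℕ) (y z : E) :
    ∑ js : Fin t → Fin n, (∏ j, ‖row A (js j)‖ ^ 2 / frobSq A) * ⟪y, applySeq A t js z⟫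
      = ⟪(⇑(Mlin A))^[t] y, z⟫ := by
  induction t generalizing y with
  | zero => simp [applySeq]
  | succ t ih =>
    rw [← Fintype.sum_equiv (Fin.snocEquiv (fun _ => Fin n))
      (fun p => (∏ j, ‖row A ((Fin.snoc p.2 p.1 : Fin (t+1) → Fin n) j)‖ ^ 2 / frobSq A)
        * ⟪y, applySeq A (t+1) (Fin.snoc p.2 p.1) z⟫)
      (fun js => (∏ j, ‖row A (js j)‖ ^ 2 / frobSq A) * ⟪y, applySeq A (t+1) js z⟫)
      (fun p => rfl)]
    rw [Fintype.sum_prod_type]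
    have step : ∀ (i : Fin n) (f : Fin t → Fin n),
        (∏ j, ‖row A ((Fin.snoc f i : Fin (t+1) → Fin n) j)‖ ^ 2 / frobSq A)
          * ⟪y, applySeq A (t+1) (Fin.snoc f i) z⟫
        = (∏ j, ‖row A (f j)‖ ^ 2 / frobSq A)
          * ((‖row A i‖ ^ 2 / frobSq A) * ⟪y, reflRow A i (applySeq A t f z)⟫) := by
      intro i f
      have h1 : applySeq A (t+1) (Fin.snoc f i) z = reflRow A i (applySeq A t f z) := by
        show reflRow A ((Fin.snoc f i : Fin (t+1) → Fin n) (Fin.last t)) _ = _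
        simp only [Fin.snoc_last, Fin.snoc_castSucc]
      rw [h1, Fin.prod_univ_castSucc]
      simp only [Fin.snoc_last, Fin.snoc_castSucc]
      ring
    calc ∑ i : Fin n, ∑ f : Fin t → Fin n,
          (∏ j, ‖row A ((Fin.snoc f i : Fin (t+1) → Fin n) j)‖ ^ 2 / frobSq A)
            * ⟪y, applySeq A (t+1) (Fin.snoc f i) z⟫
        = ∑ f : Fin t → Fin n, ∑ i : Fin n, (∏ j, ‖row A (f j)‖ ^ 2 / frobSq A)
            * ((‖row A i‖ ^ 2 / frobSq A) * ⟪y, reflRow A i (applySeq A t f z)⟫) := by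
          rw [Finset.sum_comm]
          exact Finset.sum_congr rfl fun f _ => Finset.sum_congr rfl fun i _ => step i f
      _ = ∑ f : Fin t → Fin n, (∏ j, ‖row A (f j)‖ ^ 2 / frobSq A)
            * ⟪Mlin A y, applySeq A t f z⟫ := by
          refine Finset.sum_congr rfl fun f _ => ?_
          rw [← Finset.mul_sum, sum_p_inner A hA hn1, ← Mlin_symm]
      _ = ⟪(⇑(Mlin A))^[t] (Mlin A y), z⟫ := ih (Mlin A y)
      _ = ⟪(⇑(Mlin A))^[t+1] y, z⟫ := by rw [← Function.iterate_succ_apply]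

lemma applySeq_add (s t : ℕ) (is : Fin (s + t) → Fin n) (x : E) :
    applySeq A (s + t) is x
      = applySeq A t (fun j => is (Fin.natAdd s j))
          (applySeq A s (fun j => is (Fin.castAdd t j)) x) := by
  induction t with
  | zero => rfl
  | succ t ih =>
    calc applySeq A (s + (t + 1)) is x
        = reflRow A (is (Fin.last (s + t)))
            (applySeq A (s + t) (fun j => is j.castSucc) x) := rfl
      _ = reflRow A (is (Fin.last (s + t)))
            (applySeq A t (fun j => is ((Fin.natAdd s j).castSucc))
              (applySeq A s (fun j => is ((Fin.castAdd t j).castSucc)) x)) := by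
            rw [ih (fun j => is j.castSucc)]
      _ = applySeq A (t + 1) (fun j => is (Fin.natAdd s j))
            (applySeq A s (fun j => is (Fin.castAdd (t + 1) j)) x) := rfl

lemma p_nonneg (hA : IsUnit A) (hn1 : 1 ≤ n) (i : Fin n) :
    0 ≤ ‖row A i‖ ^ 2 / frobSq A :=
  div_nonneg (sq_nonneg _) (frobSq_pos A hA hn1).le

lemma sum_weights_one (hA : IsUnit A) (hn1 : 1 ≤ n) (s : ℕ) :
    ∑ w : Fin s → Fin n, ∏ j, ‖row A (w j)‖ ^ 2 / frobSq A = 1 := by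
  induction s with
  | zero => simp
  | succ s ih =>
    rw [← Fintype.sum_equiv (Fin.snocEquiv (fun _ => Fin n))
      (fun p => ∏ j, ‖row A ((Fin.snoc p.2 p.1 : Fin (s+1) → Fin n) j)‖ ^ 2 / frobSq A)
      (fun w => ∏ j, ‖row A (w j)‖ ^ 2 / frobSq A) (fun p => rfl)]
    rw [Fintype.sum_prod_type]
    have step : ∀ (i : Fin n) (f : Fin s → Fin n),
        (∏ j, ‖row A ((Fin.snoc f i : Fin (s+1) → Fin n) j)‖ ^ 2 / frobSq A)
          = (∏ j, ‖row A (f j)‖ ^ 2 / frobSq A) * (‖row A i‖ ^ 2 / frobSq A) := by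
      intro i f
      rw [Fin.prod_univ_castSucc]
      simp only [Fin.snoc_last, Fin.snoc_castSucc]
    calc ∑ i : Fin n, ∑ f : Fin s → Fin n,
          ∏ j, ‖row A ((Fin.snoc f i : Fin (s+1) → Fin n) j)‖ ^ 2 / frobSq A
        = ∑ i : Fin n, ∑ f : Fin s → Fin n,
            (∏ j, ‖row A (f j)‖ ^ 2 / frobSq A) * (‖row A i‖ ^ 2 / frobSq A) := by
          exact Finset.sum_congr rfl fun i _ => Finset.sum_congr rfl fun f _ => step i f
      _ = ∑ i : Fin n, (‖row A i‖ ^ 2 / frobSq A) := by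
          refine Finset.sum_congr rfl fun i _ => ?_
          rw [← Finset.sum_mul, ih, one_mul]
      _ = 1 := sum_p_eq_one A hA hn1

lemma sum_split (s t : ℕ) (G : (Fin (s + t) → Fin n) → ℝ) :
    ∑ is : Fin (s + t) → Fin n, G is
      = ∑ u : Fin s → Fin n, ∑ v : Fin t → Fin n, G (Fin.append u v) := by
  rw [← Fintype.sum_equiv (Fin.appendEquiv s t) (fun p => G (Fin.append p.1 p.2)) G
      (fun p => rfl), Fintype.sum_prod_type]

lemma append_castLE {s t a : ℕ} (u : Fin s → Fin n) (v : Fin t → Fin n) (ha : a ≤ s)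
    (h : a ≤ s + t) (j : Fin a) :
    Fin.append u v (Fin.castLE h j) = u (Fin.castLE ha j) := by
  have he : (Fin.castLE h j : Fin (s + t)) = Fin.castAdd t (Fin.castLE ha j) := rfl
  rw [he, Fin.append_left]

lemma prod_p_append {s t : ℕ} (u : Fin s → Fin n) (v : Fin t → Fin n) :
    ∏ j, ‖row A (Fin.append u v j)‖ ^ 2 / frobSq A
      = (∏ j, ‖row A (u j)‖ ^ 2 / frobSq A) * ∏ j, ‖row A (v j)‖ ^ 2 / frobSq A := by
  rw [Fin.prod_univ_add]
  simp only [Fin.append_left, Fin.append_right]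

lemma master (hA : IsUnit A) (hn : 2 ≤ n) (x : E) (N a b : ℕ) (hab : a ≤ b) (hbN : b ≤ N) :
    |∑ is : Fin N → Fin n, (∏ j, ‖row A (is j)‖ ^ 2 / frobSq A) *
        ⟪applySeq A a (fun j => is (Fin.castLE (hab.trans hbN) j)) x,
          applySeq A b (fun j => is (Fin.castLE hbN j)) x⟫|
      ≤ (1 - 2 / (opNorm A⁻¹ ^ 2 * frobSq A)) ^ (b - a) * ‖x‖ ^ 2 := by
  obtain ⟨s, rfl⟩ : ∃ s, N = b + s := ⟨N - b, by omega⟩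
  obtain ⟨t, rfl⟩ : ∃ t, b = a + t := ⟨b - a, by omega⟩
  rw [show a + t - a = t by omega]
  set α := 1 - 2 / (opNorm A⁻¹ ^ 2 * frobSq A) with hα
  have hα0 : 0 ≤ α := alpha_nonneg A hA hn
  have hn1 : 1 ≤ n := by omega
  rw [sum_split (a + t) s]
  -- collapse the tail sum
  have hstep1 : ∀ u : Fin (a + t) → Fin n,
      (∑ w : Fin s → Fin n, (∏ j, ‖row A (Fin.append u w j)‖ ^ 2 / frobSq A) *
        ⟪applySeq A a (fun j => Fin.append u w (Fin.castLE (hab.trans hbN) j)) x,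
          applySeq A (a + t) (fun j => Fin.append u w (Fin.castLE hbN j)) x⟫)
      = (∏ j, ‖row A (u j)‖ ^ 2 / frobSq A) *
        ⟪applySeq A a (fun j => u (Fin.castLE (Nat.le_add_right a t) j)) x,
          applySeq A (a + t) u x⟫ := by
    intro u
    have e1 : ∀ w : Fin s → Fin n,
        (fun j : Fin a => Fin.append u w (Fin.castLE (hab.trans hbN) j))
          = fun j => u (Fin.castLE (Nat.le_add_right a t) j) :=
      fun w => funext fun j => append_castLE u w (Nat.le_add_right a t) _ j
    have e2 : ∀ w : Fin s → Fin n,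
        (fun j : Fin (a + t) => Fin.append u w (Fin.castLE hbN j)) = u :=
      fun w => funext fun j => append_castLE u w (le_refl (a + t)) hbN j
    calc ∑ w : Fin s → Fin n, (∏ j, ‖row A (Fin.append u w j)‖ ^ 2 / frobSq A) *
        ⟪applySeq A a (fun j => Fin.append u w (Fin.castLE (hab.trans hbN) j)) x,
          applySeq A (a + t) (fun j => Fin.append u w (Fin.castLE hbN j)) x⟫
        = ∑ w : Fin s → Fin n, (∏ j, ‖row A (w j)‖ ^ 2 / frobSq A) *
            ((∏ j, ‖row A (u j)‖ ^ 2 / frobSq A) *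
            ⟪applySeq A a (fun j => u (Fin.castLE (Nat.le_add_right a t) j)) x,
              applySeq A (a + t) u x⟫) := by
          refine Finset.sum_congr rfl fun w _ => ?_
          rw [prod_p_append, e1 w, e2 w]
          ring
      _ = _ := by
          rw [← Finset.sum_mul, sum_weights_one A hA hn1, one_mul]
  rw [Finset.sum_congr rfl fun u _ => hstep1 u]
  -- split off the prefix
  rw [sum_split a t]
  have hstep2 : ∀ (v : Fin a → Fin n) (v' : Fin t → Fin n),
      (∏ j, ‖row A (Fin.append v v' j)‖ ^ 2 / frobSq A) *
        ⟪applySeq A a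
            (fun j => Fin.append v v' (Fin.castLE (Nat.le_add_right a t) j)) x,
          applySeq A (a + t) (Fin.append v v') x⟫
      = (∏ j, ‖row A (v j)‖ ^ 2 / frobSq A) *
          ((∏ j, ‖row A (v' j)‖ ^ 2 / frobSq A) *
          ⟪applySeq A a v x, applySeq A t v' (applySeq A a v x)⟫) := by
    intro v v'
    have e1 : (fun j : Fin a => Fin.append v v' (Fin.castLE (Nat.le_add_right a t) j)) = v :=
      funext fun j => append_castLE v v' (le_refl a) (Nat.le_add_right a t) j
    have e2 : applySeq A (a + t) (Fin.append v v') x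
        = applySeq A t v' (applySeq A a v x) := by
      rw [applySeq_add]
      have h1 : (fun j : Fin t => Fin.append v v' (Fin.natAdd a j)) = v' :=
        funext fun j => Fin.append_right v v' j
      have h2 : (fun j : Fin a => Fin.append v v' (Fin.castAdd t j)) = v :=
        funext fun j => Fin.append_left v v' j
      rw [h1, h2]
    rw [prod_p_append, e1, e2]
    ring
  rw [Finset.sum_congr rfl fun v _ =>
    Finset.sum_congr rfl fun v' _ => hstep2 v v']
  have hstep3 : ∀ v : Fin a → Fin n,
      ∑ v' : Fin t → Fin n, (∏ j, ‖row A (v j)‖ ^ 2 / frobSq A) *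
          ((∏ j, ‖row A (v' j)‖ ^ 2 / frobSq A) *
          ⟪applySeq A a v x, applySeq A t v' (applySeq A a v x)⟫)
      = (∏ j, ‖row A (v j)‖ ^ 2 / frobSq A) *
          ⟪(⇑(Mlin A))^[t] (applySeq A a v x), applySeq A a v x⟫ := by
    intro v
    rw [← Finset.mul_sum, exp_inner A hA hn1 t _ _]
  rw [Finset.sum_congr rfl fun v _ => hstep3 v]
  -- final estimate
  have hbound : ∀ v : Fin a → Fin n,
      |⟪(⇑(Mlin A))^[t] (applySeq A a v x), applySeq A a v x⟫| ≤ α ^ t * ‖x‖ ^ 2 := by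
    intro v
    calc |⟪(⇑(Mlin A))^[t] (applySeq A a v x), applySeq A a v x⟫|
        ≤ ‖(⇑(Mlin A))^[t] (applySeq A a v x)‖ * ‖applySeq A a v x‖ :=
          abs_real_inner_le_norm _ _
      _ ≤ (α ^ t * ‖applySeq A a v x‖) * ‖applySeq A a v x‖ :=
          mul_le_mul_of_nonneg_right (norm_iterate_Mlin_le A hA hn t _) (norm_nonneg _)
      _ = α ^ t * ‖x‖ ^ 2 := by rw [norm_applySeq A hA a v x]; ring
  calc |∑ v : Fin a → Fin n, (∏ j, ‖row A (v j)‖ ^ 2 / frobSq A) *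
        ⟪(⇑(Mlin A))^[t] (applySeq A a v x), applySeq A a v x⟫|
      ≤ ∑ v : Fin a → Fin n, |(∏ j, ‖row A (v j)‖ ^ 2 / frobSq A) *
        ⟪(⇑(Mlin A))^[t] (applySeq A a v x), applySeq A a v x⟫| :=
        Finset.abs_sum_le_sum_abs _ _
    _ ≤ ∑ v : Fin a → Fin n, (∏ j, ‖row A (v j)‖ ^ 2 / frobSq A) * (α ^ t * ‖x‖ ^ 2) := by
        refine Finset.sum_le_sum fun v _ => ?_
        have hp : 0 ≤ ∏ j, ‖row A (v j)‖ ^ 2 / frobSq A :=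
          Finset.prod_nonneg fun j _ => p_nonneg A hA hn1 (v j)
        rw [abs_mul, abs_of_nonneg hp]
        exact mul_le_mul_of_nonneg_left (hbound v) hp
    _ = α ^ t * ‖x‖ ^ 2 := by
        rw [← Finset.sum_mul, sum_weights_one A hA hn1, one_mul]
end


/-- Decorrelation of the random sequence: for `1 ≤ k < ℓ ≤ m`,
`|E⟨y_k, y_ℓ⟩| ≤ (1 − 2/(‖A⁻¹‖²·‖A‖_F²))^{ℓ−k}·‖x‖²`, where `y₁ = x`,
`y_{j+1} = R_{i_j} y_j` (so `y_j = applySeq A (j−1)` along the first `j−1` indices) and the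
expectation is the weighted sum over all index sequences `(i₁,…,i_{m−1}) ∈ {1,…,n}^{m−1}`. -/
theorem abs_expected_inner_pair_le {n : ℕ} (hn : 2 ≤ n) (A : Matrix (Fin n) (Fin n) ℝ)
    (hA : IsUnit A) (x : EuclideanSpace ℝ (Fin n)) (m k ℓ : ℕ)
    (hk : 1 ≤ k) (hkl : k < ℓ) (hlm : ℓ ≤ m) :
    |∑ is : Fin (m - 1) → Fin n, (∏ j, ‖row A (is j)‖ ^ 2 / frobSq A) *
        ⟪applySeq A (k - 1) (fun j => is (Fin.castLE (by omega) j)) x,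
          applySeq A (ℓ - 1) (fun j => is (Fin.castLE (by omega) j)) x⟫|
      ≤ (1 - 2 / (opNorm A⁻¹ ^ 2 * frobSq A)) ^ (ℓ - k) * ‖x‖ ^ 2 := by

  have h1 : ℓ - k = (ℓ - 1) - (k - 1) := by omega
  rw [h1]
  exact master A hA hn x (m - 1) (k - 1) (ℓ - 1) (by omega) (by omega)
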